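/- Let n ≥ p ≥ 2 and m ≥ 3, and let A = 2·I_{m−2}⊗D + M⊗L be the (m−2)np × (m−2)np matrix built from D = diag(I_a, 2·I_{np−a}), L = diag(−I_a, −2·I_c, O_d) with a = p(p−1)/2, c = (n−p)p, d = p(p+1)/2, and M the (m−2)×(m−2) matrix with M[i,j] = 1 if |i−j| = 1 and 0 otherwise. Let 0 < δ ≤ 1 and let E be a symmetric real (m−2)np × (m−2)np matrix, partitioned into np×np blocks E_{ij} (1 ≤ i,j ≤ m−2), which is block tridiagonal (E_{ij} = O for |i−j| ≥ 2) and satisfies ‖E_{ii}‖₂ ≤ 28δ + 20δ² for all i and ‖E_{i,i+1}‖₂ ≤ (15/2)δ + (31/2)δ² + 14δ³ + 4δ⁴ for all i. Then every eigenvalue of A + E is at least 2 − 2·cos(π/(m−1)) − 43δ − 90δ²; that is, vᵀ(A+E)v ≥ (2 − 2·cos(π/(m−1)) − 43δ − 90δ²)·‖v‖² for all v ∈ ℝ^{(m−2)np}. -/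

import Mathlib

/-!
`M = triToeplitz N` is symmetric and nonnegative with the positive eigenvector
`(sin (kπ/(N+1)))ₖ` for the eigenvalue `2 cos (π/(N+1))`, so the weighted AM–GM inequality
`2 wᵢ wⱼ ≤ (uⱼ/uᵢ) wᵢ² + (uᵢ/uⱼ) wⱼ²` (Schur test) gives `wᵀMw ≤ 2 cos (π/(N+1)) ‖w‖²`.
Since `D` and `L` are diagonal, the quadratic form of `2 (I ⊗ D) + M ⊗ L` splits into the forms
`2d ‖w‖² + l wᵀMw` with `(d, l) ∈ {(1, -1), (2, -2), (2, 0)}`, each at least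
`(2 - 2 cos (π/(N+1))) ‖w‖²`. For `E`, Cauchy–Schwarz on each block gives
`|vᵢᵀ Eᵢⱼ vⱼ| ≤ ‖Eᵢⱼ‖₂ ‖vᵢ‖ ‖vⱼ‖`, hence `vᵀEv ≥ -(α ‖r‖² + β rᵀMr) ≥ -(α + 2β) ‖v‖²` with
`r = (‖vᵢ‖)ᵢ`, where `α` and `β` bound the diagonal and off-diagonal block norms; finally
`α + 2β ≤ 43δ + 90δ²` for `0 < δ ≤ 1`.
-/

open Matrix Real
open scoped Kronecker

noncomputable def specNorm {m n : Type*} [Fintype m] [Fintype n] [DecidableEq n]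
    (A : Matrix m n ℝ) : ℝ :=
  ‖LinearMap.toContinuousLinearMap (Matrix.toEuclideanLin A)‖

def triToeplitz (N : ℕ) : Matrix (Fin N) (Fin N) ℝ :=
  fun i j => if (i : ℕ) = (j : ℕ) + 1 ∨ (j : ℕ) = (i : ℕ) + 1 then 1 else 0

/-- `D = diag(I_a, 2I_{np−a})` with `a = p(p−1)/2`. -/
def Dmat (n p : ℕ) : Matrix (Fin (n * p)) (Fin (n * p)) ℝ :=
  Matrix.diagonal (fun i => if (i : ℕ) < p * (p - 1) / 2 then (1 : ℝ) else 2)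

/-- `L = diag(−I_a, −2I_c, O_d)` with `a = p(p−1)/2`, `c = (n−p)p`, `d = p(p+1)/2`. -/
def Lmat (n p : ℕ) : Matrix (Fin (n * p)) (Fin (n * p)) ℝ :=
  Matrix.diagonal (fun i =>
    if (i : ℕ) < p * (p - 1) / 2 then (-1 : ℝ)
    else if (i : ℕ) < p * (p - 1) / 2 + (n - p) * p then -2 else 0)

lemma dotProduct_mulVec_eq_sum_sum {ι : Type*} [Fintype ι] (A : Matrix ι ι ℝ) (w : ι → ℝ) :
    w ⬝ᵥ A *ᵥ w = ∑ i, ∑ j, A i j * (w i * w j) := by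
  simp only [dotProduct, mulVec, Finset.mul_sum]
  congr! 2
  ring

lemma dotProduct_self_nonneg {ι : Type*} [Fintype ι] (v : ι → ℝ) : 0 ≤ v ⬝ᵥ v := by
  simpa using dotProduct_star_self_nonneg v

lemma norm_toLp_eq_sqrt_dotProduct {n : Type*} [Fintype n] (x : n → ℝ) :
    ‖(WithLp.toLp 2 x : EuclideanSpace ℝ n)‖ = √(x ⬝ᵥ x) := by
  rw [norm_eq_sqrt_real_inner, EuclideanSpace.inner_toLp_toLp, star_trivial]

lemma abs_dotProduct_mulVec_le_specNorm {m n : Type*} [Fintype m] [Fintype n] [DecidableEq n]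
    (B : Matrix m n ℝ) (x : m → ℝ) (y : n → ℝ) :
    |x ⬝ᵥ B *ᵥ y| ≤ specNorm B * √(x ⬝ᵥ x) * √(y ⬝ᵥ y) := by
  have hBy : ‖(WithLp.toLp 2 (B *ᵥ y) : EuclideanSpace ℝ m)‖ ≤ specNorm B * √(y ⬝ᵥ y) := by
    rw [← norm_toLp_eq_sqrt_dotProduct]
    exact (LinearMap.toContinuousLinearMap (toEuclideanLin B)).le_opNorm (WithLp.toLp 2 y)
  calc |x ⬝ᵥ B *ᵥ y|
      = |inner ℝ (WithLp.toLp 2 (B *ᵥ y) : EuclideanSpace ℝ m) (WithLp.toLp 2 x)| := by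
        rw [EuclideanSpace.inner_toLp_toLp, star_trivial]
    _ ≤ ‖(WithLp.toLp 2 (B *ᵥ y) : EuclideanSpace ℝ m)‖ * √(x ⬝ᵥ x) := by
        rw [← norm_toLp_eq_sqrt_dotProduct]
        exact abs_real_inner_le_norm _ _
    _ ≤ specNorm B * √(y ⬝ᵥ y) * √(x ⬝ᵥ x) := by gcongr
    _ = specNorm B * √(x ⬝ᵥ x) * √(y ⬝ᵥ y) := by ring

lemma mul_le_weighted_sq_add {a b : ℝ} (ha : 0 < a) (hb : 0 < b) (x y : ℝ) :
    x * y ≤ (b / a * x ^ 2 + a / b * y ^ 2) / 2 := by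
  have key : (b / a * x ^ 2 + a / b * y ^ 2) / 2 - x * y = (b * x - a * y) ^ 2 / (2 * a * b) := by
    field_simp
    ring
  have : 0 ≤ (b * x - a * y) ^ 2 / (2 * a * b) := by positivity
  linarith

theorem dotProduct_mulVec_le_of_mulVec_eq_smul {ι : Type*} [Fintype ι] {T : Matrix ι ι ℝ}
    (hT : T.IsSymm) (hT0 : ∀ i j, 0 ≤ T i j) {u : ι → ℝ} (hu : ∀ i, 0 < u i) {μ : ℝ}
    (hTu : T *ᵥ u = μ • u) (w : ι → ℝ) : w ⬝ᵥ T *ᵥ w ≤ μ * (w ⬝ᵥ w) := by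
  set a : ι → ι → ℝ := fun i j => T i j * (u j / u i * w i ^ 2)
  have hrow : ∀ i, ∑ j, a i j = μ * (w i * w i) := by
    intro i
    have hi : ∑ j, T i j * u j = μ * u i := congrFun hTu i
    have := (hu i).ne'
    calc ∑ j, a i j = (∑ j, T i j * u j) * (w i ^ 2 / u i) := by
          rw [Finset.sum_mul]; congr! 1 with j; ring
      _ = μ * (w i * w i) := by rw [hi]; field_simp
  have hpair : ∀ i j, T i j * (w i * w j) ≤ (a i j + a j i) / 2 := by
    intro i j
    have h := mul_le_mul_of_nonneg_left (mul_le_weighted_sq_add (hu i) (hu j) (w i) (w j)) (hT0 i j)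
    simp only [a, hT.apply i j]
    linarith
  calc w ⬝ᵥ T *ᵥ w = ∑ i, ∑ j, T i j * (w i * w j) := dotProduct_mulVec_eq_sum_sum T w
    _ ≤ ∑ i, ∑ j, (a i j + a j i) / 2 := by gcongr with i _ j _; exact hpair i j
    _ = ∑ i, ∑ j, a i j := by
        simp only [← Finset.sum_div, Finset.sum_add_distrib]
        rw [Finset.sum_comm (f := fun i j => a j i)]
        ring
    _ = μ * (w ⬝ᵥ w) := by simp only [hrow, dotProduct, Finset.mul_sum]

lemma triToeplitz_isSymm (N : ℕ) : (triToeplitz N).IsSymm := by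
  ext i j
  simp [triToeplitz, or_comm]

lemma triToeplitz_nonneg (N : ℕ) (i j : Fin N) : 0 ≤ triToeplitz N i j := by
  unfold triToeplitz; split_ifs <;> norm_num

lemma triToeplitz_mulVec_apply {N : ℕ} {f : ℕ → ℝ} (h0 : f 0 = 0) (hN : f (N + 1) = 0)
    (i : Fin N) : (triToeplitz N *ᵥ fun j => f (j + 1)) i = f i + f (i + 2) := by
  have hsplit : ∀ j : Fin N, triToeplitz N i j * f (j + 1) =
      (if (j : ℕ) + 1 = i then f (j + 1) else 0) + (if (j : ℕ) = i + 1 then f (j + 1) else 0) := by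
    intro j
    unfold triToeplitz
    split_ifs <;> first | omega | ring
  simp only [mulVec, dotProduct, hsplit, Finset.sum_add_distrib]
  rw [Fin.sum_univ_eq_sum_range (fun j => if j + 1 = (i : ℕ) then f (j + 1) else 0),
    Fin.sum_univ_eq_sum_range (fun j => if j = (i : ℕ) + 1 then f (j + 1) else 0)]
  congr 1
  · have := Finset.sum_range_succ' (fun k => if k = (i : ℕ) then f k else 0) N
    rw [Finset.sum_ite_eq', if_pos (by simp)] at this
    simp [this, h0]
  · rw [Finset.sum_ite_eq']
    split_ifs with h
    · rfl
    · rw [show (i : ℕ) + 2 = N + 1 by simp at h; omega, hN]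

lemma triToeplitz_mulVec_sin (N : ℕ) :
    triToeplitz N *ᵥ (fun j : Fin N => sin (((j : ℕ) + 1 : ℕ) * (π / (N + 1)))) =
      (2 * cos (π / (N + 1))) • fun j : Fin N => sin (((j : ℕ) + 1 : ℕ) * (π / (N + 1))) := by
  set θ := π / (N + 1)
  have hN : sin ((N + 1 : ℕ) * θ) = 0 := by
    rw [show ((N + 1 : ℕ) : ℝ) * θ = π by simp only [θ]; push_cast; field_simp, sin_pi]
  ext i
  rw [triToeplitz_mulVec_apply (f := fun k => sin (k * θ)) (by simp) hN, Pi.smul_apply,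
    smul_eq_mul]
  push_cast
  rw [show ((i : ℝ) + 2) * θ = ((i : ℝ) + 1) * θ + θ by ring,
    show (i : ℝ) * θ = ((i : ℝ) + 1) * θ - θ by ring, sin_add, sin_sub]
  ring

theorem dotProduct_triToeplitz_mulVec_le (N : ℕ) (w : Fin N → ℝ) :
    w ⬝ᵥ triToeplitz N *ᵥ w ≤ 2 * cos (π / (N + 1)) * (w ⬝ᵥ w) := by
  refine dotProduct_mulVec_le_of_mulVec_eq_smul (triToeplitz_isSymm N) (triToeplitz_nonneg N)
    (fun i => sin_pos_of_pos_of_lt_pi ?_ ?_) (triToeplitz_mulVec_sin N) w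
  · positivity
  · rw [mul_div_assoc', div_lt_iff₀ (by positivity), mul_comm]
    gcongr
    exact_mod_cast Nat.succ_lt_succ i.isLt

section Blocks

variable {ι κ : Type*}

def prodBlock {R ι' κ' : Type*} (E : Matrix (ι × κ) (ι' × κ') R) (i : ι) (j : ι') :
    Matrix κ κ' R :=
  of fun s t => E (i, s) (j, t)

lemma prodBlock_of_isSymm {R : Type*} {E : Matrix (ι × κ) (ι × κ) R} (hE : E.IsSymm) (i j : ι) :
    prodBlock E j i = (prodBlock E i j)ᵀ := by
  ext s t
  exact hE.apply (i, t) (j, s)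

variable [Fintype ι] [Fintype κ]

lemma dotProduct_eq_sum_curry (v w : ι × κ → ℝ) :
    v ⬝ᵥ w = ∑ i, Function.curry v i ⬝ᵥ Function.curry w i := by
  simp only [dotProduct, Fintype.sum_prod_type, Function.curry_apply]

lemma dotProduct_kronecker_mulVec_of_isDiag (X : Matrix ι ι ℝ) {Y : Matrix κ κ ℝ}
    (hY : Y.IsDiag) (v : ι × κ → ℝ) :
    v ⬝ᵥ (X ⊗ₖ Y) *ᵥ v = ∑ s, Y s s * ((fun i => v (i, s)) ⬝ᵥ X *ᵥ fun i => v (i, s)) := by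
  classical
  rw [← hY.diagonal_diag]
  simp only [dotProduct, mulVec, Fintype.sum_prod_type, kroneckerMap_apply, diagonal_apply,
    mul_ite, mul_zero, ite_mul, zero_mul, Finset.sum_ite_eq, Finset.mem_univ, if_true,
    diag_apply, Finset.mul_sum]
  rw [Finset.sum_comm]
  congr! 3 with s _ i _ j _
  ring

lemma dotProduct_mulVec_eq_sum_prodBlock (E : Matrix (ι × κ) (ι × κ) ℝ) (v : ι × κ → ℝ) :
    v ⬝ᵥ E *ᵥ v =
      ∑ i, ∑ j, Function.curry v i ⬝ᵥ prodBlock E i j *ᵥ Function.curry v j := by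
  simp only [dotProduct, mulVec, Fintype.sum_prod_type, Function.curry_apply, prodBlock,
    of_apply, Finset.mul_sum]
  congr! 1 with i _
  rw [Finset.sum_comm]

noncomputable def blockNorms (v : ι × κ → ℝ) (i : ι) : ℝ :=
  √(Function.curry v i ⬝ᵥ Function.curry v i)

lemma blockNorms_dotProduct_self (v : ι × κ → ℝ) : blockNorms v ⬝ᵥ blockNorms v = v ⬝ᵥ v := by
  rw [dotProduct_eq_sum_curry]
  exact Finset.sum_congr rfl fun i _ => Real.mul_self_sqrt (dotProduct_self_nonneg _)

lemma neg_dotProduct_mulVec_le_of_abs_prodBlock_le (E : Matrix (ι × κ) (ι × κ) ℝ)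
    (B : Matrix ι ι ℝ) (v : ι × κ → ℝ)
    (h : ∀ i j, |Function.curry v i ⬝ᵥ prodBlock E i j *ᵥ Function.curry v j| ≤
      B i j * (blockNorms v i * blockNorms v j)) :
    -(blockNorms v ⬝ᵥ B *ᵥ blockNorms v) ≤ v ⬝ᵥ E *ᵥ v := by
  rw [dotProduct_mulVec_eq_sum_sum, dotProduct_mulVec_eq_sum_prodBlock,
    ← Finset.sum_neg_distrib]
  gcongr with i _
  rw [← Finset.sum_neg_distrib]
  gcongr with j _
  exact neg_le_of_abs_le (h i j)

end Blocks

theorem neg_le_dotProduct_mulVec_of_blockTridiagonal {N : ℕ} {κ : Type*} [Fintype κ]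
    [DecidableEq κ] (E : Matrix (Fin N × κ) (Fin N × κ) ℝ) (hsym : E.IsSymm)
    (htri : ∀ i j : Fin N, ((i : ℕ) + 2 ≤ j ∨ (j : ℕ) + 2 ≤ i) → prodBlock E i j = 0)
    {α β : ℝ} (hβ : 0 ≤ β) (hdiag : ∀ i, specNorm (prodBlock E i i) ≤ α)
    (hoff : ∀ i j : Fin N, (j : ℕ) = i + 1 → specNorm (prodBlock E i j) ≤ β)
    (v : Fin N × κ → ℝ) :
    -((α + 2 * β) * (v ⬝ᵥ v)) ≤ v ⬝ᵥ E *ᵥ v := by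
  set r := blockNorms v
  have hblock : ∀ i j γ, specNorm (prodBlock E i j) ≤ γ →
      |Function.curry v i ⬝ᵥ prodBlock E i j *ᵥ Function.curry v j| ≤ γ * (r i * r j) := by
    intro i j γ h
    calc _ ≤ specNorm (prodBlock E i j) * r i * r j := abs_dotProduct_mulVec_le_specNorm _ _ _
      _ ≤ γ * (r i * r j) := by
        rw [mul_assoc]; gcongr; exact mul_nonneg (sqrt_nonneg _) (sqrt_nonneg _)
  have hB : ∀ i j, |Function.curry v i ⬝ᵥ prodBlock E i j *ᵥ Function.curry v j| ≤
      (α • 1 + β • triToeplitz N) i j * (r i * r j) := by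
    intro i j
    simp only [Matrix.add_apply, Matrix.smul_apply, one_apply, triToeplitz, smul_eq_mul,
      Fin.ext_iff]
    obtain hij | hij | hij | hij :
        (i : ℕ) = j ∨ (j : ℕ) = i + 1 ∨ (i : ℕ) = j + 1 ∨ ((i : ℕ) + 2 ≤ j ∨ (j : ℕ) + 2 ≤ i) := by
      omega
    · obtain rfl := Fin.ext hij
      simpa using hblock i i α (hdiag i)
    · simpa [hij] using hblock i j β (hoff i j hij)
    · rw [prodBlock_of_isSymm hsym j i, dotProduct_transpose_mulVec, mul_comm (r i)]
      simpa [hij] using hblock j i β (hoff j i hij)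
    · rw [htri i j hij, zero_mulVec, dotProduct_zero, abs_zero, if_neg (by omega),
        if_neg (by omega)]
      simp
  have hT : r ⬝ᵥ triToeplitz N *ᵥ r ≤ 2 * (v ⬝ᵥ v) := by
    have h := dotProduct_triToeplitz_mulVec_le N r
    rw [blockNorms_dotProduct_self] at h
    nlinarith [cos_le_one (π / (N + 1)), dotProduct_self_nonneg v]
  have hquad : r ⬝ᵥ (α • 1 + β • triToeplitz N) *ᵥ r =
      α * (v ⬝ᵥ v) + β * (r ⬝ᵥ triToeplitz N *ᵥ r) := by
    rw [add_mulVec, smul_mulVec, smul_mulVec, one_mulVec, dotProduct_add, dotProduct_smul,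
      dotProduct_smul, blockNorms_dotProduct_self, smul_eq_mul, smul_eq_mul]
  have h := neg_dotProduct_mulVec_le_of_abs_prodBlock_le E _ v hB
  rw [hquad] at h
  nlinarith

lemma Dmat_isDiag (n p : ℕ) : (Dmat n p).IsDiag := isDiag_diagonal _

lemma Lmat_isDiag (n p : ℕ) : (Lmat n p).IsDiag := isDiag_diagonal _

lemma Lmat_apply_self_nonpos (n p : ℕ) (s : Fin (n * p)) : Lmat n p s s ≤ 0 := by
  simp only [Lmat, diagonal_apply_eq]
  split_ifs <;> norm_num

lemma two_sub_two_mul_le_Dmat_add_Lmat {c : ℝ} (hc₀ : -1 ≤ c) (hc₁ : c ≤ 1) (n p : ℕ)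
    (s : Fin (n * p)) : 2 - 2 * c ≤ 2 * Dmat n p s s + 2 * c * Lmat n p s s := by
  simp only [Dmat, Lmat, diagonal_apply_eq]
  split_ifs <;> linarith

theorem two_sub_two_cos_mul_le_dotProduct_mulVec (n p N : ℕ) (v : Fin N × Fin (n * p) → ℝ) :
    (2 - 2 * cos (π / (N + 1))) * (v ⬝ᵥ v) ≤
      v ⬝ᵥ ((2 : ℝ) • ((1 : Matrix (Fin N) (Fin N) ℝ) ⊗ₖ Dmat n p)
        + triToeplitz N ⊗ₖ Lmat n p) *ᵥ v := by
  have hvv : v ⬝ᵥ v = ∑ s, (fun i => v (i, s)) ⬝ᵥ fun i => v (i, s) := by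
    simp only [dotProduct, Fintype.sum_prod_type]
    exact Finset.sum_comm
  rw [add_mulVec, smul_mulVec, dotProduct_add, dotProduct_smul, smul_eq_mul,
    dotProduct_kronecker_mulVec_of_isDiag _ (Dmat_isDiag n p),
    dotProduct_kronecker_mulVec_of_isDiag _ (Lmat_isDiag n p), hvv, Finset.mul_sum,
    Finset.mul_sum, ← Finset.sum_add_distrib]
  gcongr with s
  set w := fun i => v (i, s)
  have hT := dotProduct_triToeplitz_mulVec_le N w
  have hL := Lmat_apply_self_nonpos n p s
  have hDL := two_sub_two_mul_le_Dmat_add_Lmat (neg_one_le_cos (π / (N + 1)))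
    (cos_le_one (π / (N + 1))) n p s
  rw [one_mulVec]
  nlinarith [mul_nonneg (neg_nonneg.2 hL) (sub_nonneg.2 hT), dotProduct_self_nonneg w]

theorem stmt15_general (n p m : ℕ) (hm : 3 ≤ m)
    (δ : ℝ) (hδ0 : 0 < δ) (hδ1 : δ ≤ 1)
    (E : Matrix (Fin (m - 2) × Fin (n * p)) (Fin (m - 2) × Fin (n * p)) ℝ)
    (hsym : E.IsSymm)
    (htri : ∀ i j : Fin (m - 2), ((i : ℕ) + 2 ≤ (j : ℕ) ∨ (j : ℕ) + 2 ≤ (i : ℕ)) →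
      (Matrix.of fun s t : Fin (n * p) => E (i, s) (j, t)) = 0)
    (hdiag : ∀ i : Fin (m - 2),
      specNorm (Matrix.of fun s t : Fin (n * p) => E (i, s) (i, t))
        ≤ 28 * δ + 20 * δ ^ 2)
    (hoff : ∀ i j : Fin (m - 2), (j : ℕ) = (i : ℕ) + 1 →
      specNorm (Matrix.of fun s t : Fin (n * p) => E (i, s) (j, t))
        ≤ (15 / 2) * δ + (31 / 2) * δ ^ 2 + 14 * δ ^ 3 + 4 * δ ^ 4) :
    ∀ v : Fin (m - 2) × Fin (n * p) → ℝ,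
      (2 - 2 * Real.cos (Real.pi / (m - 1)) - 43 * δ - 90 * δ ^ 2) * (v ⬝ᵥ v) ≤
        v ⬝ᵥ (((2 : ℝ) • ((1 : Matrix (Fin (m - 2)) (Fin (m - 2)) ℝ) ⊗ₖ Dmat n p)
              + triToeplitz (m - 2) ⊗ₖ Lmat n p) + E).mulVec v := by
  intro v
  have hN : ((m - 2 : ℕ) : ℝ) + 1 = m - 1 := by
    rw [Nat.cast_sub (by omega)]
    ring
  have hA := two_sub_two_cos_mul_le_dotProduct_mulVec n p (m - 2) v
  have hE := neg_le_dotProduct_mulVec_of_blockTridiagonal E hsym htri (by positivity) hdiag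
    hoff v
  have hcoeff : (28 * δ + 20 * δ ^ 2) + 2 * ((15 / 2) * δ + (31 / 2) * δ ^ 2 + 14 * δ ^ 3
      + 4 * δ ^ 4) ≤ 43 * δ + 90 * δ ^ 2 := by
    nlinarith [pow_le_pow_of_le_one hδ0.le hδ1 (show 2 ≤ 3 by norm_num),
      pow_le_pow_of_le_one hδ0.le hδ1 (show 2 ≤ 4 by norm_num)]
  rw [hN] at hA
  rw [add_mulVec, dotProduct_add]
  nlinarith [dotProduct_self_nonneg v]

/-- Eigenvalue lower bound for the perturbed Hessian `A + E` of the extended leapfrog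
objective: every eigenvalue of `A + E` is at least
`2 − 2cos(π/(m−1)) − 43δ − 90δ²`. -/
theorem stmt15 (n p m : ℕ) (hp : 2 ≤ p) (hnp : p ≤ n) (hm : 3 ≤ m)
    (δ : ℝ) (hδ0 : 0 < δ) (hδ1 : δ ≤ 1)
    (E : Matrix (Fin (m - 2) × Fin (n * p)) (Fin (m - 2) × Fin (n * p)) ℝ)
    (hsym : E.IsSymm)
    (htri : ∀ i j : Fin (m - 2), ((i : ℕ) + 2 ≤ (j : ℕ) ∨ (j : ℕ) + 2 ≤ (i : ℕ)) →
      (Matrix.of fun s t : Fin (n * p) => E (i, s) (j, t)) = 0)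
    (hdiag : ∀ i : Fin (m - 2),
      specNorm (Matrix.of fun s t : Fin (n * p) => E (i, s) (i, t))
        ≤ 28 * δ + 20 * δ ^ 2)
    (hoff : ∀ i j : Fin (m - 2), (j : ℕ) = (i : ℕ) + 1 →
      specNorm (Matrix.of fun s t : Fin (n * p) => E (i, s) (j, t))
        ≤ (15 / 2) * δ + (31 / 2) * δ ^ 2 + 14 * δ ^ 3 + 4 * δ ^ 4) :
    ∀ v : Fin (m - 2) × Fin (n * p) → ℝ,
      (2 - 2 * Real.cos (Real.pi / (m - 1)) - 43 * δ - 90 * δ ^ 2) * (v ⬝ᵥ v) ≤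
        v ⬝ᵥ (((2 : ℝ) • ((1 : Matrix (Fin (m - 2)) (Fin (m - 2)) ℝ) ⊗ₖ Dmat n p)
              + triToeplitz (m - 2) ⊗ₖ Lmat n p) + E).mulVec v :=
  stmt15_general n p m hm δ hδ0 hδ1 E hsym htri hdiag hoff
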